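/- Let P, Q be orthogonal projections on a Hilbert space with Q - P in the Schatten class J_3, and let f_t(λ) = (1+t)λ^3/(1+tλ^2) for t ≥ 0. Then f_t(Q-P) is trace class and tr f_t(Q-P) = tr (Q-P)^3 for all 0 ≤ t < ∞. -/

import Mathlib

open scoped InnerProductSpace
open ContinuousLinearMap in
/-- Sum over a Hilbert basis of `⟨e i, |T|^p (e i)⟩`, where `|T|^p = (T†T)^{p/2}`
is defined by the continuous functional calculus. -/
noncomputable def schattenSum {H : Type*} [NormedAddCommGroup H] [InnerProductSpace ℂ H]
    [CompleteSpace H] {ι : Type*} (b : HilbertBasis ι ℂ H) (p : ℝ) (T : H →L[ℂ] H) : ℝ :=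
  ∑' i, (⟪b i, (cfc (fun x : ℝ => x ^ (p / 2)) (adjoint T * T)) (b i)⟫_ℂ).re

open ContinuousLinearMap in
/-- `T` belongs to the Schatten ideal `J_p` (w.r.t. the basis `b`). -/
def MemSchatten {H : Type*} [NormedAddCommGroup H] [InnerProductSpace ℂ H]
    [CompleteSpace H] {ι : Type*} (b : HilbertBasis ι ℂ H) (p : ℝ) (T : H →L[ℂ] H) : Prop :=
  Summable fun i => (⟪b i, (cfc (fun x : ℝ => x ^ (p / 2)) (adjoint T * T)) (b i)⟫_ℂ).re

/-- The Schatten `p`-norm. -/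
noncomputable def schattenNorm {H : Type*} [NormedAddCommGroup H] [InnerProductSpace ℂ H]
    [CompleteSpace H] {ι : Type*} (b : HilbertBasis ι ℂ H) (p : ℝ) (T : H →L[ℂ] H) : ℝ :=
  (schattenSum b p T) ^ (1 / p)

/-- The trace, evaluated in the Hilbert basis `b`. -/
noncomputable def traceB {H : Type*} [NormedAddCommGroup H] [InnerProductSpace ℂ H]
    [CompleteSpace H] {ι : Type*} (b : HilbertBasis ι ℂ H) (T : H →L[ℂ] H) : ℂ :=
  ∑' i, ⟪b i, T (b i)⟫_ℂ

/-!
Write `A = Q - P` and `B = 1 - P - Q`. Since `P` and `Q` are idempotent, `B A = -A B` and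
`B² = 1 - A²`, so that
`f_t(A) - A³ = t A³ (1 + t A²)⁻¹ B² = U V B²` with `U = A |A|^{1/2}` and
`V = t |A|^{3/2} (1 + t A²)⁻¹`. Both factors are Hilbert–Schmidt because `|A|³` is trace class,
and `U V` anticommutes with `B`. Cyclicity of the trace on products of two Hilbert–Schmidt
operators gives `tr (U V B²) = tr (B U V B) = -tr (U V B²)`, hence `tr (U V B²) = 0`. Trace class
membership of `f_t(A)` and `A³` follows from domination by `(1 + t) |A|³`.
-/

open ContinuousLinearMap
open scoped InnerProduct

theorem HilbertBasis.hasSum_norm_inner_sq {𝕜 E ι : Type*} [RCLike 𝕜] [NormedAddCommGroup E]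
    [InnerProductSpace 𝕜 E] (b : HilbertBasis ι 𝕜 E) (x : E) :
    HasSum (fun i => ‖⟪b i, x⟫_𝕜‖ ^ 2) (‖x‖ ^ 2) := by
  have h := lp.hasSum_norm (p := 2) (by norm_num) (b.repr x)
  rw [ENNReal.toReal_ofNat, b.repr.norm_map] at h
  simpa only [b.repr_apply_apply, Real.rpow_two] using h

section HilbertSchmidt

variable {H : Type*} [NormedAddCommGroup H] [InnerProductSpace ℂ H]
  {ι : Type*} (b : HilbertBasis ι ℂ H)

def IsHilbertSchmidt (Y : H →L[ℂ] H) : Prop :=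
  Summable fun i => ‖Y (b i)‖ ^ 2

variable {b}

theorem IsHilbertSchmidt.summable_norm_inner_sq {Y : H →L[ℂ] H} (hY : IsHilbertSchmidt b Y) :
    Summable fun p : ι × ι => ‖⟪b p.2, Y (b p.1)⟫_ℂ‖ ^ 2 := by
  rw [summable_prod_of_nonneg fun p => sq_nonneg _]
  exact ⟨fun j => (b.hasSum_norm_inner_sq (Y (b j))).summable,
    Summable.congr hY fun j => (b.hasSum_norm_inner_sq (Y (b j))).tsum_eq.symm⟩

theorem IsHilbertSchmidt.mul_left {Y : H →L[ℂ] H} (hY : IsHilbertSchmidt b Y) (S : H →L[ℂ] H) :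
    IsHilbertSchmidt b (S * Y) := by
  refine .of_nonneg_of_le (fun _ => by positivity) (fun i => ?_) (Summable.mul_left (‖S‖ ^ 2) hY)
  rw [← mul_pow]
  gcongr
  exact S.le_opNorm (Y (b i))

variable [CompleteSpace H]

theorem IsHilbertSchmidt.adjoint {Y : H →L[ℂ] H} (hY : IsHilbertSchmidt b Y) :
    IsHilbertSchmidt b (Y†) := by
  have hT : Summable fun p : ι × ι => ‖⟪b p.2, (Y†) (b p.1)⟫_ℂ‖ ^ 2 :=
    ((Equiv.prodComm ι ι).summable_iff.mpr hY.summable_norm_inner_sq).congr fun p => by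
      simp [adjoint_inner_right, norm_inner_symm]
  exact ((summable_prod_of_nonneg fun p => sq_nonneg _).mp hT).2.congr fun j =>
    (b.hasSum_norm_inner_sq ((Y†) (b j))).tsum_eq

theorem IsHilbertSchmidt.mul_right {Y : H →L[ℂ] H} (hY : IsHilbertSchmidt b Y) (S : H →L[ℂ] H) :
    IsHilbertSchmidt b (Y * S) := by
  simpa [← star_eq_adjoint] using (hY.adjoint.mul_left (S†)).adjoint

theorem hasSum_inner_mul_apply (Y Z : H →L[ℂ] H) (x y : H) :
    HasSum (fun j => ⟪x, Y (b j)⟫_ℂ * ⟪b j, Z y⟫_ℂ) ⟪x, (Y * Z) y⟫_ℂ := by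
  simpa [← adjoint_inner_left] using b.hasSum_inner_mul_inner (adjoint Y x) (Z y)

theorem traceB_mul_comm {Y Z : H →L[ℂ] H} (hY : IsHilbertSchmidt b Y)
    (hZ : IsHilbertSchmidt b Z) : traceB b (Y * Z) = traceB b (Z * Y) := by
  set a : ι → ι → ℂ := fun i j => ⟪b i, Y (b j)⟫_ℂ * ⟪b j, Z (b i)⟫_ℂ
  have hY' : Summable fun p : ι × ι => ‖⟪b p.1, Y (b p.2)⟫_ℂ‖ ^ 2 :=
    (Equiv.prodComm ι ι).summable_iff.mpr hY.summable_norm_inner_sq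
  have ha : Summable (Function.uncurry a) := by
    refine .of_norm_bounded (hY'.add hZ.summable_norm_inner_sq) fun p => ?_
    simp only [Function.uncurry, a, norm_mul]
    nlinarith [two_mul_le_add_sq ‖⟪b p.1, Y (b p.2)⟫_ℂ‖ ‖⟪b p.2, Z (b p.1)⟫_ℂ‖,
      norm_nonneg ⟪b p.1, Y (b p.2)⟫_ℂ, norm_nonneg ⟪b p.2, Z (b p.1)⟫_ℂ]
  calc traceB b (Y * Z) = ∑' i, ∑' j, a i j :=
        tsum_congr fun i => (hasSum_inner_mul_apply Y Z _ _).tsum_eq.symm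
    _ = ∑' j, ∑' i, a i j := ha.tsum_comm.symm
    _ = traceB b (Z * Y) := tsum_congr fun j => by
        rw [← (hasSum_inner_mul_apply Z Y _ _).tsum_eq]
        exact tsum_congr fun i => mul_comm _ _

theorem traceB_neg (X : H →L[ℂ] H) : traceB b (-X) = -traceB b X := by
  simp only [traceB, neg_apply, inner_neg_right, tsum_neg]

theorem traceB_sub {X Y : H →L[ℂ] H} (hX : Summable fun i => ⟪b i, X (b i)⟫_ℂ)
    (hY : Summable fun i => ⟪b i, Y (b i)⟫_ℂ) :
    traceB b (X - Y) = traceB b X - traceB b Y := by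
  simp only [traceB, sub_apply, inner_sub_right, hX.tsum_sub hY]

theorem traceB_mul_mul_self_eq_zero {U V B : H →L[ℂ] H} (hU : IsHilbertSchmidt b U)
    (hV : IsHilbertSchmidt b V) (hB : B * (U * V) = -(U * V * B)) :
    traceB b (U * V * (B * B)) = 0 := by
  have h : traceB b (U * V * (B * B)) = -traceB b (U * V * (B * B)) :=
    calc traceB b (U * V * (B * B))
        = traceB b (V * (B * B) * U) := by
          rw [mul_assoc U, traceB_mul_comm hU (hV.mul_right (B * B))]
      _ = traceB b (V * B * (B * U)) := by simp only [mul_assoc]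
      _ = traceB b (B * U * (V * B)) := traceB_mul_comm (hV.mul_right B) (hU.mul_left B)
      _ = traceB b (-(U * V * (B * B))) := by
          rw [← mul_assoc, mul_assoc B, hB, neg_mul, mul_assoc _ B B]
      _ = -traceB b (U * V * (B * B)) := traceB_neg _
  exact self_eq_neg.mp h

end HilbertSchmidt

section FunctionalCalculus

variable {H : Type*} [NormedAddCommGroup H] [InnerProductSpace ℂ H]

theorem re_inner_apply_le_of_le {S T : H →L[ℂ] H} (h : S ≤ T) (x : H) :
    (⟪x, S x⟫_ℂ).re ≤ (⟪x, T x⟫_ℂ).re := by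
  have := ((le_def S T).mp h).re_inner_nonneg_right x
  rw [sub_apply, inner_sub_right, map_sub, RCLike.re_to_complex, RCLike.re_to_complex] at this
  linarith

theorem re_inner_real_smul_apply (c : ℝ) (T : H →L[ℂ] H) (x : H) :
    (⟪x, (c • T) x⟫_ℂ).re = c * (⟪x, T x⟫_ℂ).re := by
  rw [smul_apply, RCLike.real_smul_eq_coe_smul (K := ℂ), inner_smul_real_right]
  simp

variable [CompleteSpace H] {ι : Type*} {b : HilbertBasis ι ℂ H} {A : H →L[ℂ] H} {f g : ℝ → ℝ}

theorem summable_re_inner_cfc_of_abs_le {C : ℝ}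
    (hg : Summable fun i => (⟪b i, cfc g A (b i)⟫_ℂ).re)
    (hf : ContinuousOn f (spectrum ℝ A)) (hgc : ContinuousOn g (spectrum ℝ A))
    (hfg : ∀ x ∈ spectrum ℝ A, |f x| ≤ C * g x) :
    Summable fun i => (⟪b i, cfc f A (b i)⟫_ℂ).re := by
  have hCg : cfc (fun x => C * g x) A = C • cfc g A := cfc_const_mul C g A
  have hle : cfc f A ≤ C • cfc g A :=
    hCg ▸ cfc_mono fun x hx => (abs_le.mp (hfg x hx)).2
  have hge : -(C • cfc g A) ≤ cfc f A :=
    hCg ▸ cfc_neg (fun x => C * g x) A ▸ cfc_mono fun x hx => (abs_le.mp (hfg x hx)).1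
  refine .of_norm_bounded (hg.mul_left C) fun i => abs_le.mpr ⟨?_, ?_⟩
  · have := re_inner_apply_le_of_le hge (b i)
    rwa [neg_apply, inner_neg_right, Complex.neg_re, re_inner_real_smul_apply] at this
  · have := re_inner_apply_le_of_le hle (b i)
    rwa [re_inner_real_smul_apply] at this

theorem summable_inner_cfc_of_abs_le {C : ℝ}
    (hg : Summable fun i => (⟪b i, cfc g A (b i)⟫_ℂ).re)
    (hf : ContinuousOn f (spectrum ℝ A)) (hgc : ContinuousOn g (spectrum ℝ A))
    (hfg : ∀ x ∈ spectrum ℝ A, |f x| ≤ C * g x) :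
    Summable fun i => ⟪b i, cfc f A (b i)⟫_ℂ := by
  refine (Complex.summable_ofReal.mpr (summable_re_inner_cfc_of_abs_le hg hf hgc hfg)).congr
    fun i => ?_
  exact (cfc_predicate f A).isSymmetric.coe_re_inner_self_apply (b i)

theorem isHilbertSchmidt_cfc_of_sq_le {C : ℝ}
    (hg : Summable fun i => (⟪b i, cfc g A (b i)⟫_ℂ).re)
    (hf : ContinuousOn f (spectrum ℝ A)) (hgc : ContinuousOn g (spectrum ℝ A))
    (hfg : ∀ x ∈ spectrum ℝ A, f x ^ 2 ≤ C * g x) :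
    IsHilbertSchmidt b (cfc f A) := by
  have hsq : (cfc f A)† ∘L cfc f A = cfc (fun x => f x * f x) A := by
    rw [(cfc_predicate f A).adjoint_eq, ← mul_def, cfc_mul f f A]
  refine (summable_re_inner_cfc_of_abs_le (f := fun x => f x * f x) (C := C) hg (hf.mul hf) hgc
    fun x hx => ?_).congr fun i => ?_
  · rw [abs_mul_self, ← sq]
    exact hfg x hx
  · rw [apply_norm_sq_eq_inner_adjoint_right, hsq, RCLike.re_to_complex]

theorem mul_self_rpow_div_two (y p : ℝ) : (y * y) ^ (p / 2) = |y| ^ p := by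
  rw [← abs_mul_abs_self, ← sq, ← Real.rpow_two, ← Real.rpow_mul (abs_nonneg y)]
  ring_nf

theorem memSchatten_cfc_iff {p : ℝ} (hA : IsSelfAdjoint A) (hf : ContinuousOn f (spectrum ℝ A))
    (hp : 0 ≤ p) :
    MemSchatten b p (cfc f A) ↔
      Summable fun i => (⟪b i, cfc (fun x => |f x| ^ p) A (b i)⟫_ℂ).re := by
  have hsq : (cfc f A)† * cfc f A = cfc (fun x => f x * f x) A := by
    rw [(cfc_predicate f A).adjoint_eq, cfc_mul f f A]
  rw [MemSchatten, hsq, ← cfc_comp' (fun y => y ^ (p / 2)) (fun x => f x * f x) A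
    (Real.continuous_rpow_const (by linarith)).continuousOn (hf.mul hf)]
  simp only [mul_self_rpow_div_two]

theorem memSchatten_iff_of_isSelfAdjoint {p : ℝ} (hA : IsSelfAdjoint A) (hp : 0 ≤ p) :
    MemSchatten b p A ↔ Summable fun i => (⟪b i, cfc (fun x : ℝ => |x| ^ p) A (b i)⟫_ℂ).re := by
  simpa only [cfc_id' ℝ A] using memSchatten_cfc_iff (f := fun x => x) hA (continuousOn_id' _) hp

end FunctionalCalculus

theorem Commute.ringInverse_right {M₀ : Type*} [MonoidWithZero M₀] {a b : M₀}
    (h : Commute a b) : Commute a (Ring.inverse b) := by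
  by_cases hb : IsUnit b
  · lift b to M₀ˣ using hb
    rw [Ring.inverse_unit]
    exact h.units_inv_right
  · rw [Ring.inverse_non_unit b hb]
    exact Commute.zero_right a

section Projections

variable {R : Type*} [Ring R] {p q : R}

theorem IsIdempotentElem.one_sub_sub_mul_sub (hp : IsIdempotentElem p)
    (hq : IsIdempotentElem q) : (1 - p - q) * (q - p) = -((q - p) * (1 - p - q)) := by
  simp only [mul_sub, sub_mul, one_mul, mul_one, hp.eq, hq.eq]
  abel

theorem IsIdempotentElem.one_sub_sub_mul_self (hp : IsIdempotentElem p)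
    (hq : IsIdempotentElem q) : (1 - p - q) * (1 - p - q) = 1 - (q - p) ^ 2 := by
  simp only [sq, mul_sub, sub_mul, one_mul, mul_one, hp.eq, hq.eq]
  abel

end Projections

section Resolvent

variable {𝕜 R : Type*} [CommRing 𝕜] [Ring R] [Algebra 𝕜 R] {a : R}

theorem smul_pow_three_mul_ringInverse_sub_pow_three (c : 𝕜) (ha : IsUnit (1 + c • a ^ 2)) :
    (1 + c) • (a ^ 3 * Ring.inverse (1 + c • a ^ 2)) - a ^ 3 =
      c • (a ^ 3 * Ring.inverse (1 + c • a ^ 2)) * (1 - a ^ 2) := by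
  set r := Ring.inverse (1 + c • a ^ 2)
  have hr : r * (1 + c • a ^ 2) = 1 := Ring.inverse_mul_cancel _ ha
  calc (1 + c) • (a ^ 3 * r) - a ^ 3 = (1 + c) • (a ^ 3 * r) - a ^ 3 * r * (1 + c • a ^ 2) := by
        rw [mul_assoc, hr, mul_one]
    _ = c • (a ^ 3 * r) * (1 - a ^ 2) := by
        simp only [add_smul, one_smul, mul_add, mul_sub, mul_one, mul_smul_comm, smul_mul_assoc]
        abel

theorem mul_smul_pow_three_mul_ringInverse_of_anticomm {b : R} (c : 𝕜) (h : b * a = -(a * b)) :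
    b * (c • (a ^ 3 * Ring.inverse (1 + c • a ^ 2))) =
      -(c • (a ^ 3 * Ring.inverse (1 + c • a ^ 2)) * b) := by
  have h2 : Commute b (a ^ 2) := by
    rw [commute_iff_eq, sq, ← mul_assoc, h, neg_mul, mul_assoc, h, mul_neg, neg_neg, mul_assoc]
  have h3 : b * a ^ 3 = -(a ^ 3 * b) := by
    rw [pow_succ, ← mul_assoc, h2.eq, mul_assoc, h, mul_neg, mul_assoc]
  have hr : Commute b (Ring.inverse (1 + c • a ^ 2)) :=
    ((Commute.one_right b).add_right (h2.smul_right c)).ringInverse_right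
  rw [mul_smul_comm, ← mul_assoc, h3, neg_mul, mul_assoc, hr.eq, ← mul_assoc, smul_neg,
    smul_mul_assoc]

end Resolvent

section Rational

variable {t : ℝ}

theorem one_add_mul_sq_pos (ht : 0 ≤ t) (x : ℝ) : 0 < 1 + t * x ^ 2 := by positivity

theorem continuous_one_add_mul_sq_inv (ht : 0 ≤ t) : Continuous fun x : ℝ => (1 + t * x ^ 2)⁻¹ :=
  Continuous.inv₀ (by fun_prop) fun x => (one_add_mul_sq_pos ht x).ne'

theorem one_add_mul_sq_inv_le_one (ht : 0 ≤ t) (x : ℝ) : (1 + t * x ^ 2)⁻¹ ≤ 1 :=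
  inv_le_one_of_one_le₀ (by nlinarith [sq_nonneg x])

theorem continuous_mul_pow_three_mul_inv (ht : 0 ≤ t) (c : ℝ) :
    Continuous fun x : ℝ => c * (x ^ 3 * (1 + t * x ^ 2)⁻¹) := by
  have := continuous_one_add_mul_sq_inv ht
  fun_prop

theorem abs_mul_pow_three_mul_inv_le (ht : 0 ≤ t) (c x : ℝ) :
    |c * (x ^ 3 * (1 + t * x ^ 2)⁻¹)| ≤ |c| * |x| ^ 3 := by
  rw [abs_mul, abs_mul, abs_pow, abs_inv, abs_of_pos (one_add_mul_sq_pos ht x)]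
  gcongr
  exact mul_le_of_le_one_right (by positivity) (one_add_mul_sq_inv_le_one ht x)

variable {H : Type*} [NormedAddCommGroup H] [InnerProductSpace ℂ H] [CompleteSpace H]
  {ι : Type*} {b : HilbertBasis ι ℂ H} {A : H →L[ℂ] H}

theorem cfc_one_add_mul_sq (hA : IsSelfAdjoint A) (t : ℝ) :
    cfc (fun x : ℝ => 1 + t * x ^ 2) A = 1 + (t : ℂ) • A ^ 2 := by
  rw [cfc_const_add 1 _ A, cfc_const_mul t _ A, cfc_pow_id A 2, map_one,
    RCLike.real_smul_eq_coe_smul (K := ℂ)]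
  rfl

theorem isUnit_one_add_smul_sq (hA : IsSelfAdjoint A) (ht : 0 ≤ t) :
    IsUnit (1 + (t : ℂ) • A ^ 2) := by
  rw [← cfc_one_add_mul_sq hA t, isUnit_cfc_iff _ A]
  exact fun x _ => (one_add_mul_sq_pos ht x).ne'

theorem cfc_mul_pow_three_mul_inv (hA : IsSelfAdjoint A) (ht : 0 ≤ t) (c : ℝ) :
    cfc (fun x : ℝ => c * (x ^ 3 * (1 + t * x ^ 2)⁻¹)) A =
      (c : ℂ) • (A ^ 3 * Ring.inverse (1 + (t : ℂ) • A ^ 2)) := by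
  have hinv := (continuous_one_add_mul_sq_inv ht).continuousOn (s := spectrum ℝ A)
  rw [cfc_const_mul c (fun x => x ^ 3 * (1 + t * x ^ 2)⁻¹) A ((continuousOn_pow 3).fun_mul hinv),
    cfc_mul (fun x => x ^ 3) _ A (continuousOn_pow 3) hinv, cfc_pow_id A 3,
    cfc_inv _ A fun x _ => (one_add_mul_sq_pos ht x).ne', cfc_one_add_mul_sq hA t,
    RCLike.real_smul_eq_coe_smul (K := ℂ)]
  rfl

theorem exists_isHilbertSchmidt_mul_eq_smul_pow_three_mul_ringInverse (hA : IsSelfAdjoint A)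
    (ht : 0 ≤ t) (hS : Summable fun i => (⟪b i, cfc (fun x : ℝ => |x| ^ 3) A (b i)⟫_ℂ).re) :
    ∃ U V, IsHilbertSchmidt b U ∧ IsHilbertSchmidt b V ∧
      U * V = (t : ℂ) • (A ^ 3 * Ring.inverse (1 + (t : ℂ) • A ^ 2)) := by
  have hinv := continuous_one_add_mul_sq_inv ht
  have hsqrt (x : ℝ) : √|x| ^ 2 = |x| := Real.sq_sqrt (abs_nonneg x)
  have hcube : ContinuousOn (fun x : ℝ => |x| ^ 3) (spectrum ℝ A) := by fun_prop
  refine ⟨cfc (fun x => x * √|x|) A, cfc (fun x => t * (|x| * √|x|) * (1 + t * x ^ 2)⁻¹) A,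
    isHilbertSchmidt_cfc_of_sq_le (C := 1) hS (by fun_prop) hcube fun x _ => ?_,
    isHilbertSchmidt_cfc_of_sq_le (C := t ^ 2) hS (by fun_prop) hcube fun x _ => ?_, ?_⟩
  · rw [mul_pow, hsqrt, ← sq_abs, one_mul, ← pow_succ]
  · have hw := one_add_mul_sq_inv_le_one ht x
    have hw0 := (inv_pos.mpr (one_add_mul_sq_pos ht x)).le
    calc (t * (|x| * √|x|) * (1 + t * x ^ 2)⁻¹) ^ 2
        = t ^ 2 * |x| ^ 3 * ((1 + t * x ^ 2)⁻¹) ^ 2 := by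
          rw [mul_pow, mul_pow, mul_pow, hsqrt]
          ring
      _ ≤ t ^ 2 * |x| ^ 3 := mul_le_of_le_one_right (by positivity) (pow_le_one₀ hw0 hw)
  · rw [← cfc_mul _ _ A (by fun_prop) (by fun_prop), ← cfc_mul_pow_three_mul_inv hA ht t]
    congr 1
    funext x
    linear_combination (t * x * (1 + t * x ^ 2)⁻¹) * (|x| * hsqrt x + sq_abs x)

end Rational

/-- For orthogonal projections `P, Q` with `Q - P ∈ J₃` and
`f_t(A) = (1+t)A³(1+tA²)⁻¹`, `f_t(Q-P)` is trace class and
`tr f_t(Q-P) = tr (Q-P)³` for all `0 ≤ t < ∞`. -/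
theorem stmt7 {H : Type*} [NormedAddCommGroup H] [InnerProductSpace ℂ H] [CompleteSpace H]
    {ι : Type*} (b : HilbertBasis ι ℂ H) (P Q : H →L[ℂ] H)
    (hP : IsSelfAdjoint P) (hP2 : P ^ 2 = P) (hQ : IsSelfAdjoint Q) (hQ2 : Q ^ 2 = Q)
    (h3 : MemSchatten b 3 (Q - P)) (t : ℝ) (ht : 0 ≤ t) :
    MemSchatten b 1
        (((1 + t : ℝ) : ℂ) • ((Q - P) ^ 3 * Ring.inverse (1 + ((t : ℂ)) • (Q - P) ^ 2))) ∧
    traceB b (((1 + t : ℝ) : ℂ) • ((Q - P) ^ 3 * Ring.inverse (1 + ((t : ℂ)) • (Q - P) ^ 2))) =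
      traceB b ((Q - P) ^ 3) := by
  have hA : IsSelfAdjoint (Q - P) := hQ.sub hP
  have hP' : IsIdempotentElem P := (sq P).symm.trans hP2
  have hQ' : IsIdempotentElem Q := (sq Q).symm.trans hQ2
  have hcube : ContinuousOn (fun x : ℝ => |x| ^ 3) (spectrum ℝ (Q - P)) := by fun_prop
  have hf := (continuous_mul_pow_three_mul_inv ht (1 + t)).continuousOn (s := spectrum ℝ (Q - P))
  have hS : Summable fun i => (⟪b i, cfc (fun x : ℝ => |x| ^ 3) (Q - P) (b i)⟫_ℂ).re := by
    simpa only [Real.rpow_ofNat] using (memSchatten_iff_of_isSelfAdjoint hA (by norm_num)).mp h3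
  rw [← cfc_mul_pow_three_mul_inv hA ht]
  refine ⟨(memSchatten_cfc_iff hA hf zero_le_one).mpr ?_, ?_⟩
  · simp only [Real.rpow_one]
    exact summable_re_inner_cfc_of_abs_le hS hf.abs hcube fun x _ => by
      simpa only [abs_abs] using abs_mul_pow_three_mul_inv_le ht (1 + t) x
  obtain ⟨U, V, hU, hV, hUV⟩ :=
    exists_isHilbertSchmidt_mul_eq_smul_pow_three_mul_ringInverse hA ht hS
  have hf_diag := summable_inner_cfc_of_abs_le hS hf hcube fun x _ =>
    abs_mul_pow_three_mul_inv_le ht (1 + t) x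
  have hcube_diag := summable_inner_cfc_of_abs_le (C := 1) hS (continuousOn_pow 3) hcube
    fun x _ => by rw [abs_pow, one_mul]
  rw [cfc_pow_id (Q - P) 3] at hcube_diag
  rw [← sub_eq_zero, ← traceB_sub hf_diag hcube_diag, cfc_mul_pow_three_mul_inv hA ht,
    Complex.ofReal_add, Complex.ofReal_one,
    smul_pow_three_mul_ringInverse_sub_pow_three _ (isUnit_one_add_smul_sq hA ht),
    ← hP'.one_sub_sub_mul_self hQ', ← hUV]
  refine traceB_mul_mul_self_eq_zero hU hV ?_
  rw [hUV]
  exact mul_smul_pow_three_mul_ringInverse_of_anticomm _ (hP'.one_sub_sub_mul_sub hQ')
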